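/- arXiv:1907.01600 — 6 statements merged into one kernel-verified Lean document; each statement's English description precedes it below -/
import Mathlib

section
/- For any string x over Σ of length at most d (with $ appended so that x is $-terminal), the probability over a random underlying function ρ that the transcript τ(x,ρ) is complete is at least 1 − 1/n². -/
open MeasureTheory

namespace EditLSH

/-- Hash operations: hash-insert, hash-replace, hash-match. -/
inductive HashOp | ins | rep | mat
  deriving DecidableEq

/-- Grid walk characters. -/
inductive GOp | gins | gdel | grep | gloop | gmat | gstop
  deriving DecidableEq

/-- Transformation operations. -/
inductive TOp | tins | tdel | trep
  deriving DecidableEq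

/-- `p_a = √(p/(1+p))`. -/
noncomputable def pa (p : ℝ) : ℝ := Real.sqrt (p / (1 + p))

/-- `p_r = √p/(√(1+p) − √p)`. -/
noncomputable def prr (p : ℝ) : ℝ := Real.sqrt p / (Real.sqrt (1 + p) - Real.sqrt p)

/-- `L = 8d/(1−p_a) + 6 ln n`. -/
noncomputable def Lreal (p : ℝ) (d n : ℕ) : ℝ := 8 * d / (1 - pa p) + 6 * Real.log n

/-- The number of valid hash positions: `k` is a valid position iff `(k : ℝ) < Lreal p d n`
iff `k < LN p d n`. -/
noncomputable def LN (p : ℝ) (d n : ℕ) : ℕ := ⌈Lreal p d n⌉₊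

/-- An underlying function: a map from (character, hash position) pairs to pairs of reals.
Characters are `Option α`, where `none` plays the role of the special character `$`. -/
abbrev Ufun (α : Type) (p : ℝ) (d n : ℕ) : Type := (Option α × Fin (LN p d n)) → ℝ × ℝ

/-- Extend an underlying function to all of `ℕ` (positions `≥ L` are never queried). -/
noncomputable def ext {α : Type} (p : ℝ) (d n : ℕ) (ρ : Ufun α p d n) :
    Option α × ℕ → ℝ × ℝ :=
  fun ck => if h : ck.2 < LN p d n then ρ (ck.1, ⟨ck.2, h⟩) else (1, 1)

/-- A string is `$`-terminal if its last character is `$` (i.e. `none`) and `$` occurs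
nowhere else. -/
def DollarTerminal {α : Type} (x : List (Option α)) : Prop :=
  ∃ w : List α, x = w.map some ++ [none]

/-- The transcript of the hash computation: the list of operations performed by the
while loop, given the remaining input, the fuel `LN - k`, and the current output length `k`. -/
noncomputable def transcriptAux {α : Type} (pav prv : ℝ) (ρ : Option α × ℕ → ℝ × ℝ) :
    ℕ → List (Option α) → ℕ → List HashOp
  | 0, _, _ => []
  | _ + 1, [], _ => []
  | fuel + 1, c :: rest, k =>
    if (ρ (c, k)).1 ≤ pav then HashOp.ins :: transcriptAux pav prv ρ fuel (c :: rest) (k + 1)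
    else if (ρ (c, k)).2 ≤ prv then HashOp.rep :: transcriptAux pav prv ρ fuel rest (k + 1)
    else HashOp.mat :: transcriptAux pav prv ρ fuel rest (k + 1)

/-- The hash string produced by the while loop.  Output characters live in
`Option (Option α)`, with `none` playing the role of `⊥`. -/
noncomputable def hashAux {α : Type} (pav prv : ℝ) (ρ : Option α × ℕ → ℝ × ℝ) :
    ℕ → List (Option α) → ℕ → List (Option (Option α))
  | 0, _, _ => []
  | _ + 1, [], _ => []
  | fuel + 1, c :: rest, k =>
    if (ρ (c, k)).1 ≤ pav then none :: hashAux pav prv ρ fuel (c :: rest) (k + 1)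
    else if (ρ (c, k)).2 ≤ prv then none :: hashAux pav prv ρ fuel rest (k + 1)
    else some c :: hashAux pav prv ρ fuel rest (k + 1)

/-- The transcript `τ(x,ρ)`. -/
noncomputable def transcript {α : Type} (p : ℝ) (d n : ℕ) (ρ : Ufun α p d n)
    (x : List (Option α)) : List HashOp :=
  transcriptAux (pa p) (prr p) (ext p d n ρ) (LN p d n) x 0

/-- The hash `h_ρ(x)` of an (already `$`-terminal) string `x`. -/
noncomputable def hash {α : Type} (p : ℝ) (d n : ℕ) (ρ : Ufun α p d n)
    (x : List (Option α)) : List (Option (Option α)) :=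
  hashAux (pa p) (prr p) (ext p d n ρ) (LN p d n) x 0

/-- `τ(x,ρ)` is complete if `|τ(x,ρ)| < L`. -/
noncomputable def CompleteT (p : ℝ) (d n : ℕ) (τ : List HashOp) : Prop :=
  (τ.length : ℝ) < Lreal p d n

/-- The index function `i(x,k,ρ)`: the scanning index just before the `(k+1)`-st operation,
i.e. the number of non-hash-insert operations among the first `k` operations. -/
noncomputable def idx {α : Type} (p : ℝ) (d n : ℕ) (ρ : Ufun α p d n)
    (x : List (Option α)) (k : ℕ) : ℕ :=
  ((transcript p d n ρ x).take k).countP (fun op => decide (op ≠ HashOp.ins))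

/-- The `k`-th character `g_k(x,y,ρ)` of the grid walk. -/
noncomputable def gridChar {α : Type} [DecidableEq α] (p : ℝ) (d n : ℕ) (ρ : Ufun α p d n)
    (x y : List (Option α)) (k : ℕ) : GOp :=
  if k < min (transcript p d n ρ x).length (transcript p d n ρ y).length then
    if x[idx p d n ρ x k]? ≠ y[idx p d n ρ y k]? then
      match (transcript p d n ρ x).getD k HashOp.ins, (transcript p d n ρ y).getD k HashOp.ins with
      | HashOp.rep, HashOp.rep => GOp.grep
      | HashOp.rep, HashOp.ins => GOp.gdel
      | HashOp.ins, HashOp.rep => GOp.gins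
      | HashOp.ins, HashOp.ins => GOp.gloop
      | _, _ => GOp.gstop
    else
      match (transcript p d n ρ x).getD k HashOp.ins with
      | HashOp.ins => GOp.gloop
      | _ => GOp.gmat
  else GOp.gstop

/-- The grid walk `g(x,y,ρ)`: a sequence of length `max(|τ(x,ρ)|,|τ(y,ρ)|)`. -/
noncomputable def gridWalk {α : Type} [DecidableEq α] (p : ℝ) (d n : ℕ) (ρ : Ufun α p d n)
    (x y : List (Option α)) : List GOp :=
  (List.range (max (transcript p d n ρ x).length (transcript p d n ρ y).length)).map
    (gridChar p d n ρ x y)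

/-- The grid walk is alive: both transcripts are complete and no `stop` occurs. -/
noncomputable def Alive {α : Type} [DecidableEq α] (p : ℝ) (d n : ℕ) (ρ : Ufun α p d n)
    (x y : List (Option α)) : Prop :=
  CompleteT p d n (transcript p d n ρ x) ∧ CompleteT p d n (transcript p d n ρ y) ∧
    GOp.gstop ∉ gridWalk p d n ρ x y

/-- The uniform probability measure on `[0,1) × [0,1)`. -/
noncomputable def unif01 : Measure (ℝ × ℝ) :=
  (volume.restrict (Set.Ico (0 : ℝ) 1)).prod (volume.restrict (Set.Ico (0 : ℝ) 1))

instance : SigmaFinite unif01 := by unfold unif01; infer_instance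

/-- The probability measure on underlying functions: all values independent, each
coordinate uniform on `[0,1)`. -/
noncomputable def μU (α : Type) [Fintype α] (p : ℝ) (d n : ℕ) : Measure (Ufun α p d n) :=
  Measure.pi fun _ : Option α × Fin (LN p d n) => unif01

/-- Costs for the Levenshtein distance (formerly `Levenshtein.Cost` in Mathlib). -/
structure Levenshtein.Cost (α β δ : Type) where
  delete : α → δ
  insert : β → δ
  substitute : α → β → δ

/-- The default cost: unit deletions and insertions, substitution free iff equal
(formerly `Levenshtein.defaultCost` in Mathlib). -/
def Levenshtein.defaultCost {α : Type} [DecidableEq α] : Levenshtein.Cost α α ℕ where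
  delete _ := 1
  insert _ := 1
  substitute a b := if a = b then 0 else 1

/-- The Levenshtein distance with cost `C` (formerly `levenshtein` in Mathlib), given by its
characterising recursion (`levenshtein_nil_nil`, `_nil_cons`, `_cons_nil`, `_cons_cons`). -/
def levenshtein {α β δ : Type} (C : Levenshtein.Cost α β δ) [AddZeroClass δ] [Min δ] :
    List α → List β → δ
  | [], [] => 0
  | [], y :: ys => C.insert y + levenshtein C [] ys
  | x :: xs, [] => C.delete x + levenshtein C xs []
  | x :: xs, y :: ys =>
    min (C.delete x + levenshtein C xs (y :: ys))
      (min (C.insert y + levenshtein C (x :: xs) ys) (C.substitute x y + levenshtein C xs ys))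

/-- Edit distance: the minimum number of single-character insertions, deletions and
replacements needed to transform `x` into `y`. -/
def ED {β : Type} [DecidableEq β] (x y : List β) : ℕ :=
  levenshtein Levenshtein.defaultCost x y

/-- The smallest index at which `s` and `y` differ (`0` if `s = y`). -/
def firstDiff {β : Type} [DecidableEq β] (s y : List β) : ℕ :=
  (((List.range (max s.length y.length + 1)).find? fun i => decide (s[i]? ≠ y[i]?)).getD 0)

/-- Apply a single transformation operation to `s`, greedily relative to `y`. -/
def applyOp {β : Type} [DecidableEq β] [Inhabited β] (y s : List β) : TOp → List β
  | TOp.tins => s.insertIdx (firstDiff s y) (y.getD (firstDiff s y) default)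
  | TOp.tdel => s.eraseIdx (firstDiff s y)
  | TOp.trep => s.set (firstDiff s y) (y.getD (firstDiff s y) default)

/-- `T(x,y)`: greedily apply the transformation `T` to `x`, relative to `y`. -/
def applyT {β : Type} [DecidableEq β] [Inhabited β] (x y : List β) (T : List TOp) : List β :=
  T.foldl (fun s op => applyOp y s op) x

/-- `T` is valid for `x` and `y`. -/
def ValidT {β : Type} (T : List TOp) (x y : List β) : Prop :=
  T.countP (fun o => decide (o = TOp.tdel ∨ o = TOp.trep)) ≤ x.length ∧
    T.countP (fun o => decide (o = TOp.tins ∨ o = TOp.trep)) ≤ y.length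

/-- `T` solves `x` and `y`. -/
def Solves {β : Type} [DecidableEq β] [Inhabited β] (T : List TOp) (x y : List β) : Prop :=
  ValidT T x y ∧ applyT x y T = y ∧ ∀ i < T.length, applyT x y (T.take i) ≠ y

/-- Convert a grid walk character to a transformation operation (dropping loop/match/stop). -/
def toTOp : GOp → Option TOp
  | GOp.gins => some TOp.tins
  | GOp.gdel => some TOp.tdel
  | GOp.grep => some TOp.trep
  | _ => none

open Classical in
/-- The transformation `𝒯(x,y,ρ)` induced by `x`, `y` and `ρ`. -/
noncomputable def inducedT {α : Type} [DecidableEq α] (p : ℝ) (d n : ℕ) (ρ : Ufun α p d n)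
    (x y : List (Option α)) : List TOp :=
  if Alive p d n ρ x y then (gridWalk p d n ρ x y).filterMap toTOp else []

/-- Nodes of the graph `G(x,y)`: grid nodes `(i,j)` plus the stop node (`none`). -/
abbrev Node : Type := Option (ℕ × ℕ)

/-- The arcs of `G(x,y)`: `stepG x y v op = some v'` iff there is an arc labelled `op`
from `v` to `v'`; `none` means no outgoing arc with that label. -/
def stepG {α : Type} [DecidableEq α] (x y : List (Option α)) : Node → GOp → Option Node
  | none, _ => some none
  | some (i, j), op =>
    if i < x.length ∧ j < y.length then
      if i < x.length - 1 ∧ j < y.length - 1 then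
        if x[i]? ≠ y[j]? then
          match op with
          | GOp.gdel => some (some (i + 1, j))
          | GOp.grep => some (some (i + 1, j + 1))
          | GOp.gins => some (some (i, j + 1))
          | GOp.gloop => some (some (i, j))
          | GOp.gstop => some none
          | GOp.gmat => none
        else
          match op with
          | GOp.gmat => some (some (i + 1, j + 1))
          | GOp.gloop => some (some (i, j))
          | _ => none
      else if i = x.length - 1 ∧ j < y.length - 1 then
        match op with
        | GOp.gins => some (some (i, j + 1))
        | GOp.gloop => some (some (i, j))
        | GOp.gdel | GOp.grep | GOp.gstop => some none
        | GOp.gmat => none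
      else if i < x.length - 1 ∧ j = y.length - 1 then
        match op with
        | GOp.gdel => some (some (i + 1, j))
        | GOp.gloop => some (some (i, j))
        | GOp.gins | GOp.grep | GOp.gstop => some none
        | GOp.gmat => none
      else
        match op with
        | GOp.gloop => some (some (i, j))
        | _ => none
    else none

/-- Follow a list of grid-walk characters through `G(x,y)` starting at node `v`;
returns `none` if at some step the required arc does not exist. -/
def walkFrom {α : Type} [DecidableEq α] (x y : List (Option α)) : Node → List GOp → Option Node
  | v, [] => some v
  | v, op :: rest =>
    match stepG x y v op with
    | none => none
    | some v' => walkFrom x y v' rest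

/-!
An incomplete transcript has `⌈L⌉` operations, all but at most `|x| + 1` of them hash-inserts.
Each step reads a fresh coordinate of `ρ`, so whatever happened before, it is a hash-insert with
probability `p_a ≤ 1/2`; hence `E[4 ^ #inserts] ≤ (1 + 3 p_a) ^ ⌈L⌉ ≤ (5/2) ^ ⌈L⌉`. Markov's
inequality bounds the failure probability by `(5/2) ^ ⌈L⌉ / 4 ^ (⌈L⌉ - d - 1)
= 4 ^ (d + 1) (5/8) ^ ⌈L⌉`, and `L ≥ 8 d + 6 ln n` makes this at most `1 / n²`.
-/

open scoped ENNReal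

def insertCount (τ : List HashOp) : ℕ := τ.countP (· = HashOp.ins)

theorem insertCount_cons (o : HashOp) (τ : List HashOp) :
    insertCount (o :: τ) = insertCount τ + if o = HashOp.ins then 1 else 0 := by
  simp [insertCount, List.countP_cons]

section Transcript

variable {α : Type} (a r : ℝ)

theorem length_transcriptAux_le_insertCount_add (f : Option α × ℕ → ℝ × ℝ) :
    ∀ (fuel : ℕ) (rest : List (Option α)) (k : ℕ),
      (transcriptAux a r f fuel rest k).length ≤
        insertCount (transcriptAux a r f fuel rest k) + rest.length
  | 0, _, _ => by simp [transcriptAux]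
  | _ + 1, [], _ => by simp [transcriptAux]
  | fuel + 1, c :: rest, k => by
    have ih_ins := length_transcriptAux_le_insertCount_add f fuel (c :: rest) (k + 1)
    have ih := length_transcriptAux_le_insertCount_add f fuel rest (k + 1)
    simp only [transcriptAux]
    split_ifs <;> simp only [List.length_cons, insertCount_cons, reduceCtorEq, if_true,
      if_false] at ih_ins ⊢ <;> omega

theorem transcriptAux_congr {f g : Option α × ℕ → ℝ × ℝ} :
    ∀ (fuel : ℕ) (rest : List (Option α)) (k : ℕ),
      (∀ c i, k ≤ i → f (c, i) = g (c, i)) →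
      transcriptAux a r f fuel rest k = transcriptAux a r g fuel rest k
  | 0, _, _, _ => by simp [transcriptAux]
  | _ + 1, [], _, _ => by simp [transcriptAux]
  | fuel + 1, c :: rest, k, hfg => by
    have hnext : ∀ c' i, k + 1 ≤ i → f (c', i) = g (c', i) :=
      fun c' i hi => hfg c' i (by omega)
    simp only [transcriptAux, hfg c k le_rfl]
    split_ifs <;> rw [transcriptAux_congr fuel _ (k + 1) hnext]

end Transcript

instance : IsProbabilityMeasure unif01 := by
  constructor
  rw [unif01, ← Set.univ_prod_univ, Measure.prod_prod]
  simp [Real.volume_Ico]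

instance {α : Type} [Fintype α] {p : ℝ} {d n : ℕ} : IsProbabilityMeasure (μU α p d n) := by
  unfold μU; infer_instance

theorem unif01_fst_le {a : ℝ} (ha1 : a < 1) :
    unif01 {r : ℝ × ℝ | r.1 ≤ a} = ENNReal.ofReal a := by
  have hprod : {r : ℝ × ℝ | r.1 ≤ a} = Set.Iic a ×ˢ Set.univ := by ext; simp
  have hIic : Set.Iic a ∩ Set.Ico 0 1 = Set.Icc 0 a := by
    ext y
    simp only [Set.mem_inter_iff, Set.mem_Iic, Set.mem_Ico, Set.mem_Icc]
    exact ⟨fun h => ⟨h.2.1, h.1⟩, fun h => ⟨h.2, h.1, h.2.trans_lt ha1⟩⟩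
  rw [hprod, unif01, Measure.prod_prod, Measure.restrict_apply measurableSet_Iic,
    Measure.restrict_apply_univ, hIic, Real.volume_Ico, Real.volume_Icc]
  simp

theorem lintegral_ite_fst_le_unif01 {a : ℝ} (ha1 : a < 1) (u v : ℝ≥0∞) :
    ∫⁻ y, (if y.1 ≤ a then u else v) ∂unif01 =
      u * ENNReal.ofReal a + v * (1 - ENNReal.ofReal a) := by
  have hS : MeasurableSet {r : ℝ × ℝ | r.1 ≤ a} := measurable_fst measurableSet_Iic
  have hite : (fun y : ℝ × ℝ => if y.1 ≤ a then u else v) =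
      fun y => {r | r.1 ≤ a}.indicator (fun _ => u) y +
        {r | r.1 ≤ a}ᶜ.indicator (fun _ => v) y := by
    ext y
    by_cases h : y.1 ≤ a <;> simp [h]
  rw [hite, lintegral_add_left (measurable_const.indicator hS),
    lintegral_indicator_const hS, lintegral_indicator_const hS.compl,
    prob_compl_eq_one_sub hS, unif01_fst_le ha1]

section Weight

variable {α : Type} {p : ℝ} {d n : ℕ} (a r : ℝ) (t : ℝ≥0∞)

noncomputable def insertWeight (fuel : ℕ) (rest : List (Option α)) (k : ℕ)
    (ρ : Ufun α p d n) : ℝ≥0∞ :=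
  t ^ insertCount (transcriptAux a r (ext p d n ρ) fuel rest k)

theorem insertWeight_zero (rest : List (Option α)) (k : ℕ) :
    insertWeight (p := p) (d := d) (n := n) a r t 0 rest k = 1 := by
  funext ρ; simp [insertWeight, transcriptAux, insertCount]

theorem insertWeight_nil (fuel k : ℕ) :
    insertWeight (α := α) (p := p) (d := d) (n := n) a r t fuel [] k = 1 := by
  funext ρ; cases fuel <;> simp [insertWeight, transcriptAux, insertCount]

theorem insertWeight_succ_cons (fuel : ℕ) (c : Option α) (rest : List (Option α)) (k : ℕ)
    (ρ : Ufun α p d n) :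
    insertWeight a r t (fuel + 1) (c :: rest) k ρ =
      if (ext p d n ρ (c, k)).1 ≤ a then t * insertWeight a r t fuel (c :: rest) (k + 1) ρ
      else insertWeight a r t fuel rest (k + 1) ρ := by
  simp only [insertWeight, transcriptAux]
  split_ifs <;> simp [insertCount, pow_succ, mul_comm]

theorem measurable_ext_apply (ck : Option α × ℕ) :
    Measurable fun ρ : Ufun α p d n => ext p d n ρ ck := by
  unfold ext
  split
  · exact measurable_pi_apply _
  · exact measurable_const

theorem measurable_insertWeight :
    ∀ (fuel : ℕ) (rest : List (Option α)) (k : ℕ),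
      Measurable (insertWeight (p := p) (d := d) (n := n) a r t fuel rest k)
  | 0, rest, k => by rw [insertWeight_zero]; exact measurable_const
  | _ + 1, [], k => by rw [insertWeight_nil]; exact measurable_const
  | fuel + 1, c :: rest, k => by
    simp_rw [funext (insertWeight_succ_cons a r t fuel c rest k)]
    exact Measurable.ite ((measurable_ext_apply (c, k)).fst measurableSet_Iic)
      ((measurable_insertWeight fuel _ _).const_mul t) (measurable_insertWeight fuel _ _)

theorem insertWeight_update_of_lt [DecidableEq α] (fuel : ℕ) (rest : List (Option α)) (k : ℕ)
    (ρ : Ufun α p d n) {j : Option α × Fin (LN p d n)} (hj : j.2 < k) (y : ℝ × ℝ) :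
    insertWeight a r t fuel rest k (Function.update ρ j y) = insertWeight a r t fuel rest k ρ := by
  unfold insertWeight
  congr 2
  refine transcriptAux_congr a r fuel rest k fun c i hki => ?_
  unfold ext
  split
  · exact Function.update_of_ne (by rintro rfl; exact absurd hj (not_lt.2 hki)) _ _
  · rfl

end Weight

theorem lmarginal_const_mul {δ : Type*} [DecidableEq δ] {X : δ → Type*}
    [∀ i, MeasurableSpace (X i)] (μ : ∀ i, Measure (X i)) (s : Finset δ)
    {f : (∀ i, X i) → ℝ≥0∞} (hf : Measurable f) (c : ℝ≥0∞) (x : ∀ i, X i) :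
    (∫⋯∫⁻_s, (fun y => c * f y) ∂μ) x = c * (∫⋯∫⁻_s, f ∂μ) x :=
  lintegral_const_mul c (hf.comp measurable_updateFinset)

section Chernoff

variable {α : Type} {p : ℝ} {d n : ℕ} {a : ℝ} (r : ℝ) {t : ℝ≥0∞}

/-- `T` contains every position the remaining steps can read, so the position read by the
current step can be integrated out first and the rest by induction. -/
theorem lmarginal_insertWeight_le [DecidableEq α] (ha1 : a < 1) (ht : 1 ≤ t) :
    ∀ (fuel : ℕ) (rest : List (Option α)) (k : ℕ), k + fuel ≤ LN p d n →
      ∀ T : Finset (Option α × Fin (LN p d n)), (∀ j, k ≤ (j.2 : ℕ) → j ∈ T) →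
      ∀ x₀ : Ufun α p d n,
        (∫⋯∫⁻_T, insertWeight a r t fuel rest k ∂fun _ => unif01) x₀ ≤
          (t * ENNReal.ofReal a + (1 - ENNReal.ofReal a)) ^ fuel := by
  set q := ENNReal.ofReal a
  have hB : 1 ≤ t * q + (1 - q) := calc
    1 = q + (1 - q) := (add_tsub_cancel_of_le (ENNReal.ofReal_le_one.2 ha1.le)).symm
    _ ≤ t * q + (1 - q) := by gcongr; exact le_mul_of_one_le_left' ht
  have hone : ∀ (T : Finset (Option α × Fin (LN p d n))) x₀,
      (∫⋯∫⁻_T, (1 : Ufun α p d n → ℝ≥0∞) ∂fun _ => unif01) x₀ = 1 := by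
    intro T x₀; simp [lmarginal]
  intro fuel
  induction fuel with
  | zero =>
    intro rest k _ T _ x₀
    rw [insertWeight_zero, hone, pow_zero]
  | succ fuel ih =>
    intro rest k hk T hT x₀
    cases rest with
    | nil => rw [insertWeight_nil, hone]; exact one_le_pow₀ hB
    | cons c rest =>
      have hkL : k < LN p d n := by omega
      set j : Option α × Fin (LN p d n) := (c, ⟨k, hkL⟩)
      have hT' : ∀ j', k + 1 ≤ (j'.2 : ℕ) → j' ∈ T.erase j := fun j' h =>
        Finset.mem_erase.2 ⟨by rintro rfl; simp [j] at h, hT j' (by omega)⟩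
      have hmeas := measurable_insertWeight (α := α) (p := p) (d := d) (n := n) a r t
      have hslice : ∀ y : ℝ × ℝ,
          (∫⋯∫⁻_T.erase j, insertWeight a r t (fuel + 1) (c :: rest) k ∂fun _ => unif01)
            (Function.update x₀ j y) ≤
            if y.1 ≤ a then t * (t * q + (1 - q)) ^ fuel else (t * q + (1 - q)) ^ fuel := by
        intro y
        rw [lmarginal_update_of_notMem (hmeas _ _ _) (Finset.notMem_erase j T)]
        have hext : ∀ ρ : Ufun α p d n, ext p d n (Function.update ρ j y) (c, k) = y := by
          intro ρ; simp [ext, hkL, j]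
        have hcomp : insertWeight a r t (fuel + 1) (c :: rest) k ∘ (Function.update · j y) =
            fun ρ => if y.1 ≤ a then t * insertWeight a r t fuel (c :: rest) (k + 1) ρ
              else insertWeight a r t fuel rest (k + 1) ρ := by
          funext ρ
          simp only [Function.comp, insertWeight_succ_cons, hext,
            insertWeight_update_of_lt a r t _ _ _ ρ (j := j) (lt_add_one k)]
        rw [hcomp]
        split_ifs
        · rw [lmarginal_const_mul _ _ (hmeas _ _ _)]
          gcongr
          exact ih _ _ (by omega) _ hT' x₀
        · exact ih _ _ (by omega) _ hT' x₀
      rw [lmarginal_erase _ (hmeas _ _ _) (hT j le_rfl)]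
      calc _ ≤ ∫⁻ y, (if y.1 ≤ a then t * (t * q + (1 - q)) ^ fuel
                else (t * q + (1 - q)) ^ fuel) ∂unif01 := lintegral_mono hslice
        _ = (t * q + (1 - q)) ^ (fuel + 1) := by
          rw [lintegral_ite_fst_le_unif01 ha1]; ring

end Chernoff

theorem le_insertCount_of_not_completeT {α : Type} {p : ℝ} {d n : ℕ} {ρ : Ufun α p d n}
    {x : List (Option α)} (h : ¬ CompleteT p d n (transcript p d n ρ x)) :
    LN p d n ≤ insertCount (transcript p d n ρ x) + x.length :=
  (Nat.ceil_le.2 (not_lt.1 h)).trans (length_transcriptAux_le_insertCount_add _ _ _ _ _ _)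

section Completeness

variable {α : Type} [Fintype α] {p : ℝ} {d n : ℕ}

theorem lintegral_insertWeight_le {a : ℝ} (r : ℝ) {t : ℝ≥0∞} (ha1 : a < 1) (ht : 1 ≤ t)
    (x : List (Option α)) :
    ∫⁻ ρ, insertWeight a r t (LN p d n) x 0 ρ ∂μU α p d n ≤
      (t * ENNReal.ofReal a + (1 - ENNReal.ofReal a)) ^ LN p d n := by
  classical
  rw [μU, lintegral_eq_lmarginal_univ (fun _ => (0, 0))]
  exact lmarginal_insertWeight_le r ha1 ht _ x 0 (zero_add _).le _
    (fun _ _ => Finset.mem_univ _) _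

theorem four_mul_add_one_sub_le {a : ℝ} (ha0 : 0 ≤ a) (ha : a ≤ 1 / 2) :
    4 * ENNReal.ofReal a + (1 - ENNReal.ofReal a) ≤ 5 / 2 := by
  rw [← ENNReal.ofReal_one, ← ENNReal.ofReal_sub _ ha0, ← ENNReal.ofReal_ofNat 4,
    ← ENNReal.ofReal_mul (by norm_num), ← ENNReal.ofReal_add (by positivity) (by linarith),
    show (5 / 2 : ℝ≥0∞) = ENNReal.ofReal (5 / 2) by norm_num [ENNReal.ofReal_div_of_pos]]
  exact ENNReal.ofReal_le_ofReal (by linarith)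

theorem measure_not_completeT_le (hpa : pa p ≤ 1 / 2) {x : List (Option α)} {l : ℕ}
    (hx : x.length ≤ l) :
    μU α p d n {ρ | ¬ CompleteT p d n (transcript p d n ρ x)} ≤
      (5 / 2) ^ LN p d n / 4 ^ (LN p d n - l) := by
  set N := LN p d n
  have hsub : {ρ | ¬ CompleteT p d n (transcript p d n ρ x)} ⊆
      {ρ | 4 ^ (N - l) ≤ insertWeight (pa p) (prr p) 4 N x 0 ρ} := fun ρ hρ =>
    show (4 : ℝ≥0∞) ^ (N - l) ≤ 4 ^ insertCount (transcript p d n ρ x) from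
    pow_le_pow_right₀ (by norm_num) (by have := le_insertCount_of_not_completeT hρ; omega)
  have hpa1 : pa p < 1 := hpa.trans_lt (by norm_num)
  rw [ENNReal.le_div_iff_mul_le (Or.inl (by positivity)) (Or.inl (by simp)), mul_comm]
  calc 4 ^ (N - l) * μU α p d n {ρ | ¬ CompleteT p d n (transcript p d n ρ x)}
      ≤ 4 ^ (N - l) * μU α p d n {ρ | 4 ^ (N - l) ≤ insertWeight (pa p) (prr p) 4 N x 0 ρ} := by
        gcongr
    _ ≤ ∫⁻ ρ, insertWeight (pa p) (prr p) 4 N x 0 ρ ∂μU α p d n :=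
        mul_meas_ge_le_lintegral₀ (measurable_insertWeight _ _ _ _ _ _).aemeasurable _
    _ ≤ (4 * ENNReal.ofReal (pa p) + (1 - ENNReal.ofReal (pa p))) ^ N :=
        lintegral_insertWeight_le _ hpa1 (by norm_num) x
    _ ≤ (5 / 2) ^ N := by gcongr; exact four_mul_add_one_sub_le (Real.sqrt_nonneg _) hpa

end Completeness

theorem pa_le_half {p : ℝ} (hp0 : 0 ≤ p) (hp : p ≤ 1 / 3) : pa p ≤ 1 / 2 := by
  rw [pa, Real.sqrt_le_left (by norm_num), div_le_iff₀ (by linarith)]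
  linarith

theorem one_third_le_log_eight_fifths : 1 / 3 ≤ Real.log (8 / 5) := by
  rw [Real.le_log_iff_exp_le (by norm_num)]
  refine le_of_pow_le_pow_left₀ (n := 3) (by norm_num) (by norm_num) ?_
  rw [← Real.exp_nat_mul]
  norm_num
  linarith [Real.exp_one_lt_d9]

theorem sq_le_eight_fifths_rpow {x : ℝ} (hx : 1 ≤ x) : x ^ 2 ≤ (8 / 5 : ℝ) ^ (6 * Real.log x) := by
  rw [← Real.exp_log (by positivity : 0 < x ^ 2), Real.log_pow,
    Real.rpow_def_of_pos (by norm_num)]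
  refine Real.exp_le_exp.2 ?_
  push_cast
  nlinarith [one_third_le_log_eight_fifths, Real.log_nonneg hx]

theorem four_pow_succ_le_eight_fifths_pow {d : ℕ} (hd : 1 ≤ d) :
    (4 : ℝ) ^ (d + 1) ≤ (8 / 5) ^ (8 * d) := calc
  (4 : ℝ) ^ (d + 1) ≤ 4 ^ (2 * d) := pow_le_pow_right₀ (by norm_num) (by omega)
  _ = 16 ^ d := by rw [pow_mul]; norm_num
  _ ≤ ((8 / 5) ^ 8) ^ d := by gcongr; norm_num
  _ = (8 / 5) ^ (8 * d) := by rw [← pow_mul, mul_comm]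

theorem sq_mul_four_pow_le_eight_fifths_pow_LN {p : ℝ} {d n : ℕ} (hn : 1 ≤ n) (hd : 1 ≤ d)
    (hpa0 : 0 ≤ pa p) (hpa1 : pa p < 1) :
    (n : ℝ) ^ 2 * 4 ^ (d + 1) ≤ (8 / 5) ^ LN p d n := by
  have h8d : (8 * d : ℝ) ≤ 8 * d / (1 - pa p) := le_div_self (by positivity) (by linarith)
    (by linarith)
  calc (n : ℝ) ^ 2 * 4 ^ (d + 1)
      ≤ (8 / 5 : ℝ) ^ (6 * Real.log n) * (8 / 5 : ℝ) ^ (8 * d / (1 - pa p)) := by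
        gcongr
        · exact sq_le_eight_fifths_rpow (by exact_mod_cast hn)
        · calc (4 : ℝ) ^ (d + 1) ≤ (8 / 5) ^ (8 * d) := four_pow_succ_le_eight_fifths_pow hd
            _ = (8 / 5 : ℝ) ^ (8 * d : ℝ) := by rw [← Real.rpow_natCast]; push_cast; rfl
            _ ≤ _ := Real.rpow_le_rpow_of_exponent_le (by norm_num) h8d
    _ = (8 / 5 : ℝ) ^ Lreal p d n := by
        rw [Lreal, Real.rpow_add (by norm_num), mul_comm]
    _ ≤ (8 / 5 : ℝ) ^ (LN p d n : ℝ) :=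
        Real.rpow_le_rpow_of_exponent_le (by norm_num) (Nat.le_ceil _)
    _ = (8 / 5) ^ LN p d n := Real.rpow_natCast _ _

theorem five_halves_pow_div_four_pow_le {N d n : ℕ} (hn : 1 ≤ n)
    (h : (n : ℝ) ^ 2 * 4 ^ (d + 1) ≤ (8 / 5) ^ N) :
    (5 / 2 : ℝ≥0∞) ^ N / 4 ^ (N - (d + 1)) ≤ 1 / (n : ℝ≥0∞) ^ 2 := by
  have hreal : (n : ℝ) ^ 2 * (5 / 2) ^ N ≤ 4 ^ (N - (d + 1)) := by
    refine le_of_mul_le_mul_right ?_ (by positivity : (0 : ℝ) < 4 ^ (d + 1))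
    calc (n : ℝ) ^ 2 * (5 / 2) ^ N * 4 ^ (d + 1) = (n ^ 2 * 4 ^ (d + 1)) * (5 / 2) ^ N := by ring
      _ ≤ (8 / 5) ^ N * (5 / 2) ^ N := by gcongr
      _ = 4 ^ N := by rw [← mul_pow]; norm_num
      _ ≤ 4 ^ (N - (d + 1)) * 4 ^ (d + 1) := by
        rw [← pow_add]; exact pow_le_pow_right₀ (by norm_num) (by omega)
  have hn0 : (0 : ℝ) < n := by exact_mod_cast hn
  have hdiv : (5 / 2 : ℝ) ^ N / 4 ^ (N - (d + 1)) ≤ 1 / (n : ℝ) ^ 2 := by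
    rw [div_le_div_iff₀ (by positivity) (by positivity)]; linarith
  have := ENNReal.ofReal_le_ofReal hdiv
  rwa [ENNReal.ofReal_div_of_pos (by positivity), ENNReal.ofReal_div_of_pos (by positivity),
    ENNReal.ofReal_pow (by norm_num), ENNReal.ofReal_pow (by norm_num),
    ENNReal.ofReal_pow hn0.le, ENNReal.ofReal_div_of_pos (by norm_num), ENNReal.ofReal_one,
    ENNReal.ofReal_natCast, ENNReal.ofReal_ofNat, ENNReal.ofReal_ofNat,
    ENNReal.ofReal_ofNat] at this

theorem stmt0_general {α : Type} [Fintype α]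
    (p : ℝ) (hp0 : 0 < p) (hp : p ≤ 1 / 3) (n d : ℕ) (hn : 2 ≤ n) (hd : 1 ≤ d)
    (x : List α) (hx : x.length ≤ d) :
    1 - 1 / (n : ENNReal) ^ 2 ≤
      μU α p d n {ρ | CompleteT p d n (transcript p d n ρ (x.map some ++ [none]))} := by
  have hpa : pa p ≤ 1 / 2 := pa_le_half hp0.le hp
  have hlen : (x.map some ++ [none]).length ≤ d + 1 := by simpa using hx
  have hbad := (measure_not_completeT_le (d := d) (n := n) hpa hlen).trans
    (five_halves_pow_div_four_pow_le (by omega) (sq_mul_four_pow_le_eight_fifths_pow_LN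
      (by omega) hd (Real.sqrt_nonneg _) (hpa.trans_lt (by norm_num))))
  calc 1 - 1 / (n : ENNReal) ^ 2
      ≤ 1 - μU α p d n {ρ | ¬ CompleteT p d n (transcript p d n ρ (x.map some ++ [none]))} :=
        tsub_le_tsub_left hbad 1
    _ ≤ μU α p d n {ρ | CompleteT p d n (transcript p d n ρ (x.map some ++ [none]))} := by
        rw [tsub_le_iff_right, ← measure_univ (μ := μU α p d n)]
        exact measure_univ_le_add_compl _

/-- For any string `x` over `Σ` of length at most `d` (with `$` appended),
the probability over a random underlying function `ρ` that the transcript `τ(x,ρ)` is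
complete is at least `1 − 1/n²`. -/
theorem stmt0 {α : Type} [Fintype α] [DecidableEq α]
    (p : ℝ) (hp0 : 0 < p) (hp : p ≤ 1 / 3) (n d : ℕ) (hn : 2 ≤ n) (hd : 1 ≤ d)
    (x : List α) (hx : x.length ≤ d) :
    1 - 1 / (n : ENNReal) ^ 2 ≤
      μU α p d n {ρ | CompleteT p d n (transcript p d n ρ (x.map some ++ [none]))} :=
  stmt0_general p hp0 hp n d hn hd x hx

end EditLSH
end

section
/- Let 0 < p_a ≤ 1/2 and let n ≥ 2 and d ≥ 1 be integers. Let X₁, …, X_d be independent random variables, each geometrically distributed with Pr[X_i = k] = p_a^k (1 − p_a) for k = 0, 1, 2, …. Then Pr[X₁ + ⋯ + X_d > 7d/(1−p_a) + 6 ln n] ≤ 1/n². -/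
open MeasureTheory ProbabilityTheory
open scoped ENNReal

/-! A Chernoff bound with base `r = (2 + p_a) / (3 p_a)`: this choice makes every exponential
moment `E[r ^ Xᵢ] = (1 - p_a) / (1 - r p_a)` equal to `3`, so by independence and Markov's
inequality the probability is at most `3 ^ d / r ^ m`, where `m = 7d/(1 - p_a) + 6 ln n`.
Since `ln r ≥ 1 - 1/r ≥ 2 (1 - p_a) / 3`, we get `m ln r ≥ 14d/3 + 2 ln n ≥ d ln 3 + 2 ln n`,
i.e. `r ^ m ≥ 3 ^ d n ^ 2`. -/

section

variable {Ω : Type*} [MeasurableSpace Ω] {μ : Measure Ω}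

theorem lintegral_ofReal_pow_of_geometric {X : Ω → ℕ} (hX : Measurable X) {p s : ℝ}
    (hp0 : 0 ≤ p) (hp1 : p ≤ 1) (hs : 0 ≤ s) (hsp : s * p < 1)
    (hgeom : ∀ k, μ {ω | X ω = k} = ENNReal.ofReal (p ^ k * (1 - p))) :
    ∫⁻ ω, ENNReal.ofReal s ^ X ω ∂μ = ENNReal.ofReal ((1 - p) / (1 - s * p)) := by
  have hterm : ∀ k : ℕ, ENNReal.ofReal s ^ k * μ.map X {k}
      = ENNReal.ofReal ((s * p) ^ k * (1 - p)) := by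
    intro k
    rw [Measure.map_apply hX (measurableSet_singleton k)]
    change _ * μ {ω | X ω = k} = _
    rw [hgeom, ← ENNReal.ofReal_pow hs, ← ENNReal.ofReal_mul (by positivity), mul_pow, mul_assoc]
  have hsp0 : 0 ≤ s * p := mul_nonneg hs hp0
  rw [← lintegral_map measurable_from_top hX, lintegral_countable', tsum_congr hterm,
    ← ENNReal.ofReal_tsum_of_nonneg (fun k => by have := sub_nonneg.2 hp1; positivity)
      ((summable_geometric_of_lt_one hsp0 hsp).mul_right _),
    tsum_mul_right, tsum_geometric_of_lt_one hsp0 hsp, inv_mul_eq_div]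

theorem lintegral_pow_sum_eq_prod_of_iIndepFun {ι : Type*} {X : ι → Ω → ℕ}
    (hX : ∀ i, Measurable (X i)) (hind : iIndepFun X μ) (s : Finset ι) (R : ℝ≥0∞) :
    ∫⁻ ω, R ^ (∑ i ∈ s, X i ω) ∂μ = ∏ i ∈ s, ∫⁻ ω, R ^ X i ω ∂μ := by
  simp_rw [← Finset.prod_pow_eq_pow_sum]
  exact lintegral_prod_eq_prod_lintegral_of_indepFun s _
    (hind.comp (fun _ k => R ^ k) fun _ => measurable_from_top)
    fun i => measurable_from_top.comp (hX i)

theorem measure_lt_natCast_le_lintegral_div {Y : Ω → ℕ} (hY : Measurable Y) {r : ℝ}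
    (hr : 1 ≤ r) (m : ℝ) :
    μ {ω | m < Y ω} ≤ (∫⁻ ω, ENNReal.ofReal r ^ Y ω ∂μ) / ENNReal.ofReal (r ^ m) := by
  have hrm : 0 < r ^ m := Real.rpow_pos_of_pos (by linarith) m
  calc μ {ω | m < Y ω} ≤ μ {ω | ENNReal.ofReal (r ^ m) ≤ ENNReal.ofReal r ^ Y ω} := by
        refine measure_mono fun ω (hω : m < Y ω) => ?_
        rw [Set.mem_ofPred_eq, ← ENNReal.ofReal_pow (by linarith), ← Real.rpow_natCast]
        exact ENNReal.ofReal_le_ofReal (Real.rpow_le_rpow_of_exponent_le hr hω.le)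
    _ ≤ _ := meas_ge_le_lintegral_div (measurable_from_top.comp hY).aemeasurable
        (ENNReal.ofReal_pos.2 hrm).ne' ENNReal.ofReal_ne_top

end

theorem three_pow_mul_sq_le_rpow {p : ℝ} (hp0 : 0 < p) (hp : p ≤ 1 / 2) (n d : ℕ)
    (hn : 1 ≤ n) :
    (3 : ℝ) ^ d * n ^ 2 ≤ ((2 + p) / (3 * p)) ^ (7 * d / (1 - p) + 6 * Real.log n) := by
  have hr : 0 < (2 + p) / (3 * p) := by positivity
  have hlogn : 0 ≤ Real.log n := Real.log_nonneg (by exact_mod_cast hn)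
  have hlog3 : Real.log 3 ≤ 2 := by
    linarith [Real.log_le_sub_one_of_pos (by norm_num : (0 : ℝ) < 3)]
  have hq : 0 < 1 - p := by linarith
  have hlogr : 2 * (1 - p) / 3 ≤ Real.log ((2 + p) / (3 * p)) :=
    calc 2 * (1 - p) / 3 ≤ 2 * (1 - p) / (2 + p) := by gcongr; linarith
      _ = 1 - ((2 + p) / (3 * p))⁻¹ := by field_simp; ring
      _ ≤ _ := Real.one_sub_inv_le_log_of_pos hr
  rw [Real.le_rpow_iff_log_le (by positivity) hr, Real.log_mul (by positivity) (by positivity),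
    Real.log_pow, Real.log_pow]
  calc (d : ℝ) * Real.log 3 + (2 : ℕ) * Real.log n
      ≤ (7 * d / (1 - p) + 6 * Real.log n) * (2 * (1 - p) / 3) := by
        have : (7 * d / (1 - p) + 6 * Real.log n) * (2 * (1 - p) / 3)
            = 14 * d / 3 + 4 * (1 - p) * Real.log n := by
          field_simp; ring
        rw [this]; push_cast
        nlinarith [mul_le_mul_of_nonneg_right hp hlogn]
    _ ≤ _ := by gcongr

theorem stmt1_general {Ω : Type} [MeasurableSpace Ω] (μ : Measure Ω)
    (p_a : ℝ) (hpa0 : 0 < p_a) (hpa : p_a ≤ 1 / 2)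
    (n d : ℕ) (hn : 2 ≤ n)
    (X : Fin d → Ω → ℕ) (hmeas : ∀ i, Measurable (X i))
    (hindep : ProbabilityTheory.iIndepFun X μ)
    (hgeom : ∀ (i : Fin d) (k : ℕ), μ {ω | X i ω = k} = ENNReal.ofReal (p_a ^ k * (1 - p_a))) :
    μ {ω | 7 * d / (1 - p_a) + 6 * Real.log n < ∑ i, (X i ω : ℝ)} ≤
      1 / (n : ENNReal) ^ 2 := by
  set r := (2 + p_a) / (3 * p_a)
  have hr : 1 ≤ r := by rw [le_div_iff₀ (by positivity)]; linarith
  have hrp : r * p_a = (2 + p_a) / 3 := by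
    rw [div_mul_eq_mul_div, mul_div_mul_right _ _ hpa0.ne']
  have hmoment : ∀ i, ∫⁻ ω, ENNReal.ofReal r ^ X i ω ∂μ = ENNReal.ofReal 3 := fun i => by
    rw [lintegral_ofReal_pow_of_geometric (hmeas i) hpa0.le (by linarith) (by positivity)
      (by linarith) (hgeom i), hrp, show 1 - (2 + p_a) / 3 = (1 - p_a) / 3 by ring,
      div_div_cancel₀ (by linarith)]
  have hchernoff := measure_lt_natCast_le_lintegral_div (μ := μ)
    (Finset.measurable_sum Finset.univ fun i _ => hmeas i) hr
    (7 * d / (1 - p_a) + 6 * Real.log n)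
  simp only [Nat.cast_sum,
    lintegral_pow_sum_eq_prod_of_iIndepFun hmeas hindep, hmoment, Finset.prod_const,
    Finset.card_univ, Fintype.card_fin] at hchernoff
  have hn0 : (0 : ℝ) < n := by exact_mod_cast (by omega : 0 < n)
  refine hchernoff.trans ?_
  rw [← ENNReal.ofReal_pow (by norm_num), ← ENNReal.ofReal_div_of_pos (by positivity),
    ← ENNReal.ofReal_natCast, ← ENNReal.ofReal_pow hn0.le, ← ENNReal.ofReal_one,
    ← ENNReal.ofReal_div_of_pos (by positivity)]
  refine ENNReal.ofReal_le_ofReal ((div_le_div_iff₀ (by positivity) (by positivity)).2 ?_)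
  rw [one_mul]
  exact three_pow_mul_sq_le_rpow hpa0 hpa n d (by omega)

/-- if `X₁, …, X_d` are independent geometric random variables with
`Pr[Xᵢ = k] = p_a^k (1 − p_a)`, where `0 < p_a ≤ 1/2`, then
`Pr[X₁ + ⋯ + X_d > 7d/(1−p_a) + 6 ln n] ≤ 1/n²`. -/
theorem stmt1 {Ω : Type} [MeasurableSpace Ω] (μ : Measure Ω) [IsProbabilityMeasure μ]
    (p_a : ℝ) (hpa0 : 0 < p_a) (hpa : p_a ≤ 1 / 2)
    (n d : ℕ) (hn : 2 ≤ n) (hd : 1 ≤ d)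
    (X : Fin d → Ω → ℕ) (hmeas : ∀ i, Measurable (X i))
    (hindep : ProbabilityTheory.iIndepFun X μ)
    (hgeom : ∀ (i : Fin d) (k : ℕ), μ {ω | X i ω = k} = ENNReal.ofReal (p_a ^ k * (1 - p_a))) :
    μ {ω | 7 * d / (1 - p_a) + 6 * Real.log n < ∑ i, (X i ω : ℝ)} ≤
      1 / (n : ENNReal) ^ 2 :=
  stmt1_general μ p_a hpa0 hpa n d hn X hmeas hindep hgeom
end

section
/- Let 0 < p ≤ 1/3 and let W : ℤ × ℤ → ℝ satisfy: W(i,j) ≥ 0 for all i, j; W(i,j) = 0 whenever i < 0 or j < 0; W(0,0) ≤ 1; and for every (i,j) with i, j ≥ 0 and (i,j) ≠ (0,0), W(i,j) ≤ p·(W(i−1,j) + W(i−1,j−1) + W(i,j−1)). Then for all i, j ≥ 0, W(i,j) ≤ (2p/(1−p))^{max(i,j)}. -/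
/-- the two-dimensional recursion bound: if `W` is nonnegative, vanishes on
negative indices, `W(0,0) ≤ 1`, and `W(i,j) ≤ p(W(i−1,j) + W(i−1,j−1) + W(i,j−1))` away
from the origin, then `W(i,j) ≤ (2p/(1−p))^{max(i,j)}`. -/
theorem stmt13 (p : ℝ) (hp0 : 0 < p) (hp : p ≤ 1 / 3) (W : ℤ × ℤ → ℝ)
    (hnonneg : ∀ i j : ℤ, 0 ≤ W (i, j))
    (hzero : ∀ i j : ℤ, i < 0 ∨ j < 0 → W (i, j) = 0)
    (hinit : W (0, 0) ≤ 1)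
    (hrec : ∀ i j : ℤ, 0 ≤ i → 0 ≤ j → (i, j) ≠ (0, 0) →
      W (i, j) ≤ p * (W (i - 1, j) + W (i - 1, j - 1) + W (i, j - 1))) :
    ∀ i j : ℤ, 0 ≤ i → 0 ≤ j → W (i, j) ≤ (2 * p / (1 - p)) ^ (max i j).toNat := by
  have h1p : (0:ℝ) < 1 - p := by linarith
  set q : ℝ := 2 * p / (1 - p) with hqdef
  have hq0 : 0 ≤ q := by positivity
  have hq1 : q ≤ 1 := by rw [hqdef, div_le_one h1p]; linarith
  have hid : p * (2 + q) = q := by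
    rw [hqdef]; field_simp; ring
  have key : ∀ n : ℕ, ∀ i j : ℤ, (i + j).toNat ≤ n → W (i, j) ≤ q ^ (max i j).toNat := by
    intro n
    induction n with
    | zero =>
      intro i j h
      rcases lt_or_ge i 0 with hi | hi
      · rw [hzero i j (Or.inl hi)]; positivity
      rcases lt_or_ge j 0 with hj | hj
      · rw [hzero i j (Or.inr hj)]; positivity
      have hij : i = 0 ∧ j = 0 := by omega
      obtain ⟨rfl, rfl⟩ := hij
      simpa using hinit
    | succ n ih =>
      intro i j h
      rcases lt_or_ge i 0 with hi | hi
      · rw [hzero i j (Or.inl hi)]; positivity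
      rcases lt_or_ge j 0 with hj | hj
      · rw [hzero i j (Or.inr hj)]; positivity
      by_cases h00 : i = 0 ∧ j = 0
      · obtain ⟨rfl, rfl⟩ := h00; simpa using hinit
      · have hne : (i, j) ≠ (0, 0) := by
          intro hc
          exact h00 ⟨congrArg Prod.fst hc, congrArg Prod.snd hc⟩
        obtain ⟨k, hk⟩ : ∃ k : ℕ, (max i j).toNat = k + 1 := ⟨(max i j).toNat - 1, by omega⟩
        have hb1 : W (i - 1, j) ≤ q ^ (max (i - 1) j).toNat := ih _ _ (by omega)
        have hb2 : W (i - 1, j - 1) ≤ q ^ (max (i - 1) (j - 1)).toNat := ih _ _ (by omega)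
        have hb3 : W (i, j - 1) ≤ q ^ (max i (j - 1)).toNat := ih _ _ (by omega)
        have e2 : (max (i - 1) (j - 1)).toNat = k := by omega
        rw [e2] at hb2
        have hqpow : q ^ (k + 1) ≤ q ^ k := pow_le_pow_of_le_one hq0 hq1 (by omega)
        have hsum13 : W (i - 1, j) + W (i, j - 1) ≤ q ^ k + q ^ (k + 1) := by
          rcases lt_trichotomy i j with hlt | heq | hgt
          · have e1 : (max (i - 1) j).toNat = k + 1 := by omega
            have e3 : (max i (j - 1)).toNat = k := by omega
            rw [e1] at hb1; rw [e3] at hb3; linarith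
          · have e1 : (max (i - 1) j).toNat = k + 1 := by omega
            have e3 : (max i (j - 1)).toNat = k + 1 := by omega
            rw [e1] at hb1; rw [e3] at hb3; linarith
          · have e1 : (max (i - 1) j).toNat = k := by omega
            have e3 : (max i (j - 1)).toNat = k + 1 := by omega
            rw [e1] at hb1; rw [e3] at hb3; linarith
        rw [hk]
        calc W (i, j) ≤ p * (W (i - 1, j) + W (i - 1, j - 1) + W (i, j - 1)) :=
              hrec i j hi hj hne
          _ ≤ p * ((q ^ k + q ^ (k + 1)) + q ^ k) := by
              apply mul_le_mul_of_nonneg_left _ hp0.le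
              linarith
          _ = q ^ k * (p * (2 + q)) := by ring
          _ = q ^ k * q := by rw [hid]
          _ = q ^ (k + 1) := by ring
  intro i j hi hj
  exact key (i + j).toNat i j le_rfl
end

section
/- Let 0 < p ≤ 1/3, set p_a = √(p/(1+p)) and p_r = p_a/(1−p_a), and let n ≥ 2 be an integer. Suppose p̂_a and p̂_r satisfy p_a ≤ p̂_a ≤ p_a(1 + 1/n) and p_r ≤ p̂_r ≤ p_r(1 + 1/n), with p̂_a < 1. Then p̂_a(1−p̂_a)p̂_r / (1−p̂_a²) ≥ p(1 − 2/n). -/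
/-- perturbing `p_a` and `p_r` upward by a relative factor `1 + 1/n` changes
the insert/delete step probability `p_a(1−p_a)p_r/(1−p_a²) = p` by at most a `1 − 2/n`
factor (lower bound). -/
theorem stmt15 (p : ℝ) (hp0 : 0 < p) (hp : p ≤ 1 / 3) (n : ℕ) (hn : 2 ≤ n)
    (p_a p_r pha phr : ℝ)
    (hpa : p_a = Real.sqrt (p / (1 + p))) (hpr : p_r = p_a / (1 - p_a))
    (h1 : p_a ≤ pha) (h2 : pha ≤ p_a * (1 + 1 / n))
    (h3 : p_r ≤ phr) (h4 : phr ≤ p_r * (1 + 1 / n))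
    (h5 : pha < 1) :
    p * (1 - 2 / n) ≤ pha * (1 - pha) * phr / (1 - pha ^ 2) := by
  have hpp : (0:ℝ) < 1 + p := by linarith
  have hfrac : 0 < p / (1 + p) := div_pos hp0 hpp
  have hs0 : 0 < p_a := by rw [hpa]; exact Real.sqrt_pos.mpr hfrac
  have hsq : p_a ^ 2 = p / (1 + p) := by
    rw [hpa, sq, Real.mul_self_sqrt hfrac.le]
  have hs2 : p_a ^ 2 * (1 + p) = p := by
    rw [hsq]; field_simp
  have hs4 : p_a ^ 2 ≤ 1 / 4 := by nlinarith
  have hshalf : p_a ≤ 1 / 2 := by nlinarith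
  have h1ms : (0:ℝ) < 1 - p_a := by linarith
  -- bounds on 1/n
  have hn0 : (0:ℝ) < n := by positivity
  have he0 : (0:ℝ) < 1 / n := by positivity
  have he2 : (1:ℝ) / n ≤ 1 / 2 := by
    rw [div_le_div_iff₀ hn0 (by norm_num)]
    have : (2:ℝ) ≤ n := by exact_mod_cast hn
    linarith
  have hpha0 : 0 < pha := lt_of_lt_of_le hs0 h1
  have h1mp : (0:ℝ) < 1 - pha := by linarith
  have h1pp : (0:ℝ) < 1 + pha := by linarith
  -- rewrite RHS
  have hrw : pha * (1 - pha) * phr / (1 - pha ^ 2) = pha * phr / (1 + pha) := by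
    rw [show (1:ℝ) - pha ^ 2 = (1 - pha) * (1 + pha) by ring,
        show pha * (1 - pha) * phr = (1 - pha) * (pha * phr) by ring,
        mul_div_mul_left _ _ (ne_of_gt h1mp)]
  rw [hrw, le_div_iff₀ h1pp]
  -- key: p * (1 + p_a) ≤ pha * phr
  have hphr0 : 0 < phr := lt_of_lt_of_le (by positivity : 0 < p_a / (1 - p_a)) (hpr ▸ h3)
  have hphr : p_a / (1 - p_a) ≤ phr := hpr ▸ h3
  have hmul : p_a * (p_a / (1 - p_a)) ≤ pha * phr :=
    mul_le_mul h1 hphr (by positivity) hpha0.le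
  have hid : p_a * (p_a / (1 - p_a)) = p * (1 + p_a) := by
    rw [mul_div_assoc', div_eq_iff (ne_of_gt h1ms)]
    linear_combination hs2
  have hkey : p * (1 + p_a) ≤ pha * phr := hid ▸ hmul
  -- final comparison
  have hfin : p * (1 - 2 / n) * (1 + pha) ≤ p * (1 + p_a) := by
    have h2n : (0:ℝ) ≤ 1 - 2 * (1 / n) := by linarith
    have hstep : (1 - 2 * (1 / n)) * (1 + pha) ≤ (1 - 2 * (1 / n)) * (1 + p_a * (1 + 1 / n)) :=
      mul_le_mul_of_nonneg_left (by linarith) h2n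
    have hstep2 : (1 - 2 * (1 / n)) * (1 + p_a * (1 + 1 / n)) ≤ 1 + p_a := by
      nlinarith [mul_nonneg he0.le hs0.le, mul_nonneg (mul_nonneg he0.le he0.le) hs0.le, he0.le]
    have : p * ((1 - 2 * (1 / n)) * (1 + pha)) ≤ p * (1 + p_a) :=
      mul_le_mul_of_nonneg_left (le_trans hstep hstep2) hp0.le
    calc p * (1 - 2 / n) * (1 + pha) = p * ((1 - 2 * (1 / n)) * (1 + pha)) := by ring
      _ ≤ p * (1 + p_a) := this
  linarith
end

section
/- Let 0 < p ≤ 1/3, set p_a = √(p/(1+p)) and p_r = p_a/(1−p_a), and let n ≥ 2 be an integer. Suppose p̂_a and p̂_r satisfy p_a ≤ p̂_a ≤ p_a(1 + 1/n) and p_r ≤ p̂_r ≤ p_r(1 + 1/n), and assume p_a(1 + 1/n) < 1. Then p̂_a(1−p̂_a)p̂_r / (1−p̂_a²) ≤ p·(1 + 1/n)²·(1−p_a²)/(1 − p_a²(1 + 1/n)²). -/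
/-!
Since `1 - a² = (1 - a)(1 + a)`, the step probability is `a r / (1 + a)`, which for
`a = √(p/(1+p))` and `r = a/(1-a)` equals `a²/(1 - a²) = p`. Raising `a` and `r` by at most the
factor `c = 1 + 1/n` while keeping the denominator at `1 + a` gives the bound `c² p`, and the
factor `(1 - a²)/(1 - a² c²)` on the right-hand side is at least `1`.
-/

lemma mul_one_sub_mul_div_one_sub_sq {K : Type*} [Field K] {x : K} (hx : x ≠ 1) (y : K) :
    x * (1 - x) * y / (1 - x ^ 2) = x * y / (1 + x) := by
  rw [show 1 - x ^ 2 = (1 - x) * (1 + x) by ring, mul_comm x, mul_assoc,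
    mul_div_mul_left _ _ (sub_ne_zero.mpr hx.symm)]

lemma mul_div_one_add_le_sq_mul {a a' r r' c : ℝ} (ha : 0 ≤ a) (haa' : a ≤ a')
    (ha' : a' ≤ c * a) (hr' : 0 ≤ r') (hrr' : r' ≤ c * r) :
    a' * r' / (1 + a') ≤ c ^ 2 * (a * r / (1 + a)) := by
  calc a' * r' / (1 + a') ≤ (c * a) * (c * r) / (1 + a) :=
        div_le_div₀ (by nlinarith) (mul_le_mul ha' hrr' hr' (by linarith)) (by linarith)
          (by linarith)
    _ = c ^ 2 * (a * r / (1 + a)) := by ring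

lemma sqrt_div_one_add_self_lt_one {p : ℝ} (hp : 0 ≤ p) : √(p / (1 + p)) < 1 := by
  rw [Real.sqrt_lt' one_pos, one_pow, div_lt_one (by linarith)]
  linarith

lemma mul_div_one_sub_div_one_add_eq_of_eq_sqrt {p a : ℝ} (hp : 0 ≤ p)
    (ha : a = √(p / (1 + p))) :
    a * (a / (1 - a)) / (1 + a) = p := by
  have ha1 : a < 1 := ha ▸ sqrt_div_one_add_self_lt_one hp
  have hsq : a ^ 2 = p / (1 + p) := by rw [ha, Real.sq_sqrt (by positivity)]
  have h1a : 1 - a ≠ 0 := by linarith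
  have h1a' : 1 + a ≠ 0 := by rw [ha]; positivity
  have hsq' : a ^ 2 * (1 + p) = p := by rw [hsq]; field_simp
  field_simp
  linear_combination hsq'

lemma le_mul_one_sub_sq_div_one_sub_sq_mul_sq {q a c : ℝ} (hq : 0 ≤ q) (hc : 1 ≤ c)
    (hac : a ^ 2 * c ^ 2 < 1) :
    q ≤ q * (1 - a ^ 2) / (1 - a ^ 2 * c ^ 2) := by
  rw [le_div_iff₀ (by linarith)]
  exact mul_le_mul_of_nonneg_left
    (sub_le_sub_left (le_mul_of_one_le_right (sq_nonneg a) (one_le_pow₀ hc)) 1) hq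

theorem stmt16_general (p : ℝ) (hp0 : 0 < p) (n : ℕ)
    (p_a p_r pha phr : ℝ)
    (hpa : p_a = Real.sqrt (p / (1 + p))) (hpr : p_r = p_a / (1 - p_a))
    (h1 : p_a ≤ pha) (h2 : pha ≤ p_a * (1 + 1 / n))
    (h3 : p_r ≤ phr) (h4 : phr ≤ p_r * (1 + 1 / n))
    (h5 : p_a * (1 + 1 / n) < 1) :
    pha * (1 - pha) * phr / (1 - pha ^ 2) ≤
      p * (1 + 1 / n) ^ 2 * (1 - p_a ^ 2) / (1 - p_a ^ 2 * (1 + 1 / n) ^ 2) := by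
  set c : ℝ := 1 + 1 / n
  have hc : 1 ≤ c := le_add_of_nonneg_right (by positivity)
  have hpa0 : 0 ≤ p_a := hpa ▸ Real.sqrt_nonneg _
  have hpr0 : 0 ≤ p_r := by
    rw [hpr]; exact div_nonneg hpa0 (by linarith [hpa ▸ sqrt_div_one_add_self_lt_one hp0.le])
  have hstep : p_a * p_r / (1 + p_a) = p :=
    hpr ▸ mul_div_one_sub_div_one_add_eq_of_eq_sqrt hp0.le hpa
  calc pha * (1 - pha) * phr / (1 - pha ^ 2) = pha * phr / (1 + pha) :=
        mul_one_sub_mul_div_one_sub_sq (h2.trans_lt h5).ne phr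
    _ ≤ c ^ 2 * (p_a * p_r / (1 + p_a)) :=
        mul_div_one_add_le_sq_mul hpa0 h1 (by linarith) (by linarith) (by linarith)
    _ = p * c ^ 2 := by rw [hstep, mul_comm]
    _ ≤ p * c ^ 2 * (1 - p_a ^ 2) / (1 - p_a ^ 2 * c ^ 2) :=
        le_mul_one_sub_sq_div_one_sub_sq_mul_sq (by positivity) hc (by rw [← mul_pow]; nlinarith)

/-- perturbing `p_a` and `p_r` upward by a relative factor `1 + 1/n` changes
the insert/delete step probability `p_a(1−p_a)p_r/(1−p_a²) = p` by at most the stated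
multiplicative factor (upper bound). -/
theorem stmt16 (p : ℝ) (hp0 : 0 < p) (hp : p ≤ 1 / 3) (n : ℕ) (hn : 2 ≤ n)
    (p_a p_r pha phr : ℝ)
    (hpa : p_a = Real.sqrt (p / (1 + p))) (hpr : p_r = p_a / (1 - p_a))
    (h1 : p_a ≤ pha) (h2 : pha ≤ p_a * (1 + 1 / n))
    (h3 : p_r ≤ phr) (h4 : phr ≤ p_r * (1 + 1 / n))
    (h5 : p_a * (1 + 1 / n) < 1) :
    pha * (1 - pha) * phr / (1 - pha ^ 2) ≤
      p * (1 + 1 / n) ^ 2 * (1 - p_a ^ 2) / (1 - p_a ^ 2 * (1 + 1 / n) ^ 2) :=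
  stmt16_general p hp0 n p_a p_r pha phr hpa hpr h1 h2 h3 h4 h5
end

section
/- Let 0 < p ≤ 1/3, set p_a = √(p/(1+p)) and p_r = p_a/(1−p_a), and let n ≥ 2 be an integer. Suppose p̂_a and p̂_r satisfy p_a ≤ p̂_a ≤ p_a(1 + 1/n) and p_r ≤ p̂_r ≤ p_r(1 + 1/n), with p̂_a < 1. Then (1−p̂_a)²p̂_r² / (1−p̂_a²) ≥ p(1 − 4/n). -/
/-!
Write `a = p_a` and `e = 1/n`. The defining relations read `p (1 - a²) = a²` and
`p_r (1 - a) = a`, and `p ≤ 1/3` gives `a ≤ 1/2`. Raising `p̂_a` above `a` only shrinks the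
denominator, `p (1 - p̂_a²) ≤ a²`, while `(1 - p̂_a) p̂_r ≥ (1 - a (1 + e)) a / (1 - a)`. The
elementary inequality `(1 - 4e)(1 - a)² ≤ (1 - a (1 + e))²`, valid for `a ≤ 2/3`, then gives
`((1 - p̂_a) p̂_r)² ≥ (1 - 4e) a² ≥ (1 - 4e) p (1 - p̂_a²)`.
-/

lemma one_sub_four_mul_mul_sq_le {a e : ℝ} (ha : a ≤ 2 / 3) (he : 0 ≤ e) :
    (1 - 4 * e) * (1 - a) ^ 2 ≤ (1 - a * (1 + e)) ^ 2 := by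
  nlinarith [mul_nonneg (mul_nonneg he (by linarith : 0 ≤ 1 - a)) (by linarith : 0 ≤ 4 - 6 * a),
    sq_nonneg (a * e)]

lemma one_sub_four_mul_sq_le_sq_mul {a e x y : ℝ} (ha : 0 ≤ a) (ha' : a ≤ 1 / 2)
    (he : 0 ≤ e) (he' : e ≤ 1) (hx : x ≤ a * (1 + e)) (hy : a ≤ y * (1 - a)) :
    (1 - 4 * e) * a ^ 2 ≤ ((1 - x) * y) ^ 2 := by
  have h1a : 0 < 1 - a := by linarith
  have hlow : 0 ≤ 1 - a * (1 + e) := by nlinarith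
  have hprod : a * (1 - a * (1 + e)) ≤ (1 - x) * y * (1 - a) :=
    calc a * (1 - a * (1 + e)) ≤ y * (1 - a) * (1 - a * (1 + e)) :=
          mul_le_mul_of_nonneg_right hy hlow
      _ ≤ y * (1 - a) * (1 - x) := mul_le_mul_of_nonneg_left (by linarith) (by linarith)
      _ = (1 - x) * y * (1 - a) := by ring
  refine le_of_mul_le_mul_right ?_ (pow_pos h1a 2)
  calc (1 - 4 * e) * a ^ 2 * (1 - a) ^ 2 = a ^ 2 * ((1 - 4 * e) * (1 - a) ^ 2) := by ring
    _ ≤ a ^ 2 * (1 - a * (1 + e)) ^ 2 := by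
        gcongr; exact one_sub_four_mul_mul_sq_le (by linarith) he
    _ = (a * (1 - a * (1 + e))) ^ 2 := by ring
    _ ≤ ((1 - x) * y * (1 - a)) ^ 2 := pow_le_pow_left₀ (mul_nonneg ha hlow) hprod 2
    _ = ((1 - x) * y) ^ 2 * (1 - a) ^ 2 := by ring

lemma mul_one_sub_four_mul_le_div {p a e x y : ℝ} (hp : 0 ≤ p) (hpa : p * (1 - a ^ 2) = a ^ 2)
    (ha : 0 ≤ a) (ha' : a ≤ 1 / 2) (he : 0 ≤ e) (he' : e ≤ 1)
    (hax : a ≤ x) (hx : x ≤ a * (1 + e)) (hx1 : x < 1) (hy : a ≤ y * (1 - a)) :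
    p * (1 - 4 * e) ≤ (1 - x) ^ 2 * y ^ 2 / (1 - x ^ 2) := by
  have hden : 0 < 1 - x ^ 2 := by nlinarith
  rw [le_div_iff₀ hden, ← mul_pow]
  rcases le_total 0 (1 - 4 * e) with h | h
  · calc p * (1 - 4 * e) * (1 - x ^ 2) = (1 - 4 * e) * (p * (1 - x ^ 2)) := by ring
      _ ≤ (1 - 4 * e) * a ^ 2 := by
          gcongr
          rw [← hpa]
          gcongr
      _ ≤ ((1 - x) * y) ^ 2 := one_sub_four_mul_sq_le_sq_mul ha ha' he he' hx hy
  · exact le_trans (mul_nonpos_of_nonpos_of_nonneg (mul_nonpos_of_nonneg_of_nonpos hp h)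
      hden.le) (sq_nonneg _)

lemma mul_one_sub_sq_sqrt_div_one_add {p : ℝ} (hp : 0 ≤ p) :
    p * (1 - √(p / (1 + p)) ^ 2) = √(p / (1 + p)) ^ 2 := by
  rw [Real.sq_sqrt (by positivity)]
  field_simp
  ring

lemma sqrt_div_one_add_le_half {p : ℝ} (hp : 0 ≤ p) (hp' : p ≤ 1 / 3) :
    √(p / (1 + p)) ≤ 1 / 2 := by
  rw [Real.sqrt_le_left (by norm_num), div_le_iff₀ (by linarith)]
  linarith

theorem stmt17_general (p : ℝ) (hp0 : 0 < p) (hp : p ≤ 1 / 3) (n : ℕ)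
    (p_a p_r pha phr : ℝ)
    (hpa : p_a = Real.sqrt (p / (1 + p))) (hpr : p_r = p_a / (1 - p_a))
    (h1 : p_a ≤ pha) (h2 : pha ≤ p_a * (1 + 1 / n))
    (h3 : p_r ≤ phr)
    (h5 : pha < 1) :
    p * (1 - 4 / n) ≤ (1 - pha) ^ 2 * phr ^ 2 / (1 - pha ^ 2) := by
  have ha_half : p_a ≤ 1 / 2 := hpa ▸ sqrt_div_one_add_le_half hp0.le hp
  have hy : p_a ≤ phr * (1 - p_a) := by
    have h1a : 0 < 1 - p_a := by linarith
    calc p_a = p_r * (1 - p_a) := by rw [hpr]; field_simp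
      _ ≤ phr * (1 - p_a) := mul_le_mul_of_nonneg_right h3 h1a.le
  rw [show (4 : ℝ) / n = 4 * (1 / n) by ring]
  exact mul_one_sub_four_mul_le_div hp0.le (hpa ▸ mul_one_sub_sq_sqrt_div_one_add hp0.le)
    (hpa ▸ Real.sqrt_nonneg _) ha_half (by positivity) (by simpa using Nat.cast_inv_le_one n)
    h1 h2 h5 hy

/-- perturbing `p_a` and `p_r` upward by a relative factor `1 + 1/n` changes
the replace step probability `(1−p_a)²p_r²/(1−p_a²) = p` by at most a `1 − 4/n` factor
(lower bound). -/
theorem stmt17 (p : ℝ) (hp0 : 0 < p) (hp : p ≤ 1 / 3) (n : ℕ) (hn : 2 ≤ n)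
    (p_a p_r pha phr : ℝ)
    (hpa : p_a = Real.sqrt (p / (1 + p))) (hpr : p_r = p_a / (1 - p_a))
    (h1 : p_a ≤ pha) (h2 : pha ≤ p_a * (1 + 1 / n))
    (h3 : p_r ≤ phr) (h4 : phr ≤ p_r * (1 + 1 / n))
    (h5 : pha < 1) :
    p * (1 - 4 / n) ≤ (1 - pha) ^ 2 * phr ^ 2 / (1 - pha ^ 2) :=
  stmt17_general p hp0 hp n p_a p_r pha phr hpa hpr h1 h2 h3 h5
end
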